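/- A real positive definite matrix S of order 2n belongs to K_n = {S symmetric : 2S - iJ ≥ 0} if and only if there exist symplectic matrices L, M ∈ Sp(2n,ℝ) such that S = ¼(LᵀL + MᵀM). -/

import Mathlib

open Matrix
open scoped ComplexOrder

noncomputable section

/-- The standard symplectic form matrix J = [[0, -I],[I, 0]] of order 2n. -/
def sympJ (n : ℕ) : Matrix (Fin n ⊕ Fin n) (Fin n ⊕ Fin n) ℝ :=
  Matrix.fromBlocks 0 (-1) 1 0

/-- A real 2n×2n matrix L is symplectic if Lᵀ J L = J. -/
def IsSymplectic {n : ℕ} (L : Matrix (Fin n ⊕ Fin n) (Fin n ⊕ Fin n) ℝ) : Prop :=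
  Lᵀ * sympJ n * L = sympJ n

/-- The convex set K_n of Gaussian covariance matrices:
real symmetric S of order 2n with 2S - iJ positive semidefinite (as a complex matrix). -/
def Kset (n : ℕ) : Set (Matrix (Fin n ⊕ Fin n) (Fin n ⊕ Fin n) ℝ) :=
  {S | S.IsSymm ∧
    ((2 : ℂ) • S.map (Complex.ofReal) - Complex.I • (sympJ n).map (Complex.ofReal)).PosSemidef}

/-!
By Williamson's theorem `S = Lᵀ D L` with `L` symplectic and `D = diag(μ, μ)`, `μ > 0`. Congruence
by a symplectic matrix fixes `J`, so `2S - iJ ≥ 0` iff `2D - iJ ≥ 0`, i.e. iff every `μ j ≥ 1/2`.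
Then `4 μ j = a j ^ 2 + b j ^ 2` with `a j * b j = 1`, and the diagonal symplectic matrices
`X = diag(a, b)`, `Y = diag(b, a)` satisfy `XᵀX + YᵀY = 4D`, so `S = ¼((XL)ᵀ(XL) + (YL)ᵀ(YL))`.
Conversely `LᵀL - iJ = Lᴴ(1 - iJ)L ≥ 0` for symplectic `L`, and `2S - iJ` is the average of two
such matrices.

Williamson's theorem comes from writing `S = RᵀR` and bringing the invertible antisymmetric matrix
`K = R J Rᵀ` to the normal form `O (J D) Oᵀ`, `O` orthogonal: the eigenvalues of the Hermitian
matrix `iK` come in pairs `±μ j`, since complex conjugation maps eigenvectors to eigenvectors of the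
opposite eigenvalue.
-/

section

variable {n : ℕ}

lemma sympJ_transpose : (sympJ n)ᵀ = -sympJ n := by
  simp [sympJ, fromBlocks_transpose, fromBlocks_neg]

lemma sympJ_mul_sympJ : sympJ n * sympJ n = -1 := by
  simp [sympJ, fromBlocks_multiply, ← fromBlocks_one, fromBlocks_neg]

lemma isUnit_sympJ : IsUnit (sympJ n) :=
  isUnit_iff_exists_inv'.2 ⟨-sympJ n, by rw [neg_mul, sympJ_mul_sympJ, neg_neg]⟩

lemma sympJ_mul_diagonal_comm (d : Fin n → ℝ) :
    sympJ n * diagonal (Sum.elim d d) = diagonal (Sum.elim d d) * sympJ n := by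
  simp [sympJ, ← fromBlocks_diagonal, fromBlocks_multiply]

lemma IsSymplectic.mul {L M : Matrix (Fin n ⊕ Fin n) (Fin n ⊕ Fin n) ℝ}
    (hL : IsSymplectic L) (hM : IsSymplectic M) : IsSymplectic (L * M) :=
  calc (L * M)ᵀ * sympJ n * (L * M) = Mᵀ * (Lᵀ * sympJ n * L) * M := by
        simp only [transpose_mul, Matrix.mul_assoc]
    _ = sympJ n := by rw [hL, hM]

lemma IsSymplectic.neg_sympJ_mul_transpose_mul_sympJ_mul_self
    {L : Matrix (Fin n ⊕ Fin n) (Fin n ⊕ Fin n) ℝ} (hL : IsSymplectic L) :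
    -(sympJ n * Lᵀ * sympJ n) * L = 1 := by
  calc -(sympJ n * Lᵀ * sympJ n) * L = -(sympJ n * (Lᵀ * sympJ n * L)) := by
        simp only [neg_mul, Matrix.mul_assoc]
    _ = 1 := by rw [hL, sympJ_mul_sympJ, neg_neg]

lemma IsSymplectic.isUnit {L : Matrix (Fin n ⊕ Fin n) (Fin n ⊕ Fin n) ℝ}
    (hL : IsSymplectic L) : IsUnit L :=
  isUnit_iff_exists_inv'.2 ⟨_, hL.neg_sympJ_mul_transpose_mul_sympJ_mul_self⟩

lemma isSymplectic_of_mul_sympJ_mul_transpose {L : Matrix (Fin n ⊕ Fin n) (Fin n ⊕ Fin n) ℝ}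
    (h : L * sympJ n * Lᵀ = sympJ n) : IsSymplectic L := by
  have hLt : IsSymplectic Lᵀ := by rwa [IsSymplectic, transpose_transpose]
  have hinv : Lᵀ * -(sympJ n * L * sympJ n) = 1 :=
    mul_eq_one_comm.1 (by simpa using hLt.neg_sympJ_mul_transpose_mul_sympJ_mul_self)
  calc Lᵀ * sympJ n * L = Lᵀ * -(sympJ n * L * sympJ n) * sympJ n := by
        simp [Matrix.mul_assoc, sympJ_mul_sympJ]
    _ = sympJ n := by rw [hinv, Matrix.one_mul]

lemma isSymplectic_diagonal {a b : Fin n → ℝ} (h : ∀ j, a j * b j = 1) :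
    IsSymplectic (diagonal (Sum.elim a b)) := by
  rw [IsSymplectic, diagonal_transpose, ← fromBlocks_diagonal, sympJ, fromBlocks_multiply,
    fromBlocks_multiply]
  simp [h, mul_comm (b _), -diagonal_neg]


lemma map_ofReal_mul {l m k : Type*} [Fintype m] (A : Matrix l m ℝ) (B : Matrix m k ℝ) :
    (A * B).map Complex.ofReal = A.map Complex.ofReal * B.map Complex.ofReal :=
  Matrix.map_mul (f := Complex.ofRealHom)

lemma conjTranspose_map_ofReal {m k : Type*} (A : Matrix m k ℝ) :
    (A.map Complex.ofReal)ᴴ = Aᵀ.map Complex.ofReal := by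
  ext; simp

def subISympJ (X : Matrix (Fin n ⊕ Fin n) (Fin n ⊕ Fin n) ℝ) :
    Matrix (Fin n ⊕ Fin n) (Fin n ⊕ Fin n) ℂ :=
  X.map Complex.ofReal - Complex.I • (sympJ n).map Complex.ofReal

lemma mem_Kset_iff {S : Matrix (Fin n ⊕ Fin n) (Fin n ⊕ Fin n) ℝ} :
    S ∈ Kset n ↔ S.IsSymm ∧ (subISympJ ((2 : ℝ) • S)).PosSemidef := by
  have h2 : ((2 : ℝ) • S).map Complex.ofReal = (2 : ℂ) • S.map Complex.ofReal := by ext; simp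
  rw [subISympJ, h2]
  rfl

lemma IsSymplectic.subISympJ_transpose_mul_mul {L : Matrix (Fin n ⊕ Fin n) (Fin n ⊕ Fin n) ℝ}
    (hL : IsSymplectic L) (X : Matrix (Fin n ⊕ Fin n) (Fin n ⊕ Fin n) ℝ) :
    subISympJ (Lᵀ * X * L) = star (L.map Complex.ofReal) * subISympJ X * L.map Complex.ofReal := by
  rw [subISympJ, subISympJ, star_eq_conjTranspose, conjTranspose_map_ofReal, Matrix.mul_sub,
    Matrix.sub_mul, Matrix.mul_smul, Matrix.smul_mul, ← map_ofReal_mul, ← map_ofReal_mul,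
    ← map_ofReal_mul, ← map_ofReal_mul, hL]

lemma IsSymplectic.posSemidef_subISympJ_transpose_mul_mul_iff
    {L : Matrix (Fin n ⊕ Fin n) (Fin n ⊕ Fin n) ℝ} (hL : IsSymplectic L)
    (X : Matrix (Fin n ⊕ Fin n) (Fin n ⊕ Fin n) ℝ) :
    (subISympJ (Lᵀ * X * L)).PosSemidef ↔ (subISympJ X).PosSemidef := by
  rw [hL.subISympJ_transpose_mul_mul]
  exact (hL.isUnit.map Complex.ofRealHom.mapMatrix).posSemidef_star_left_conjugate_iff

/-- `1 - iJ` is Hermitian with `(1 - iJ)² = 2 (1 - iJ)`, so it is half of its own Gram matrix. -/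
lemma posSemidef_subISympJ_one :
    (subISympJ (1 : Matrix (Fin n ⊕ Fin n) (Fin n ⊕ Fin n) ℝ)).PosSemidef := by
  set N := subISympJ (1 : Matrix (Fin n ⊕ Fin n) (Fin n ⊕ Fin n) ℝ) with hN
  have hJ : (sympJ n).map Complex.ofReal * (sympJ n).map Complex.ofReal = -1 := by
    rw [← map_ofReal_mul, sympJ_mul_sympJ, Matrix.map_neg _ Complex.ofReal_neg,
      Matrix.map_one _ Complex.ofReal_zero Complex.ofReal_one]
  have hherm : Nᴴ = N := by
    simp [hN, subISympJ, conjTranspose_map_ofReal, sympJ_transpose, Matrix.map_neg]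
  have hsq : N * N = (2 : ℂ) • N := by
    simp only [hN, subISympJ, Matrix.map_one _ Complex.ofReal_zero Complex.ofReal_one, sub_mul,
      mul_sub, Matrix.smul_mul, Matrix.mul_smul, smul_smul, hJ, Matrix.one_mul, Matrix.mul_one,
      Complex.I_mul_I]
    module
  have : N = (1 / 2 : ℂ) • (Nᴴ * N) := by
    rw [hherm, hsq, smul_smul]; norm_num
  rw [this]
  exact (posSemidef_conjTranspose_mul_self N).smul (by positivity)

lemma mem_Kset_of_isSymplectic {L M : Matrix (Fin n ⊕ Fin n) (Fin n ⊕ Fin n) ℝ}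
    (hL : IsSymplectic L) (hM : IsSymplectic M) : (1 / 4 : ℝ) • (Lᵀ * L + Mᵀ * M) ∈ Kset n := by
  refine mem_Kset_iff.2
    ⟨((isSymm_transpose_mul_self L).add (isSymm_transpose_mul_self M)).smul _, ?_⟩
  have hmid : subISympJ ((2 : ℝ) • ((1 / 4 : ℝ) • (Lᵀ * L + Mᵀ * M)))
      = (1 / 2 : ℂ) • (subISympJ (Lᵀ * 1 * L) + subISympJ (Mᵀ * 1 * M)) := by
    rw [smul_smul, Matrix.mul_one, Matrix.mul_one, subISympJ, subISympJ, subISympJ]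
    ext i j
    simp only [Matrix.sub_apply, Matrix.smul_apply, Matrix.add_apply, map_apply, smul_eq_mul]
    push_cast
    ring
  rw [hmid]
  refine PosSemidef.smul (PosSemidef.add ?_ ?_) (by positivity)
  · exact (hL.posSemidef_subISympJ_transpose_mul_mul_iff 1).2 posSemidef_subISympJ_one
  · exact (hM.posSemidef_subISympJ_transpose_mul_mul_iff 1).2 posSemidef_subISympJ_one

/-- Test `2D - iJ ≥ 0` against `e_j + i e_{n+j}`, an eigenvector of `J` for the eigenvalue `-i`. -/
lemma half_le_of_posSemidef_subISympJ {μ : Fin n → ℝ}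
    (h : (subISympJ ((2 : ℝ) • diagonal (Sum.elim μ μ))).PosSemidef) (j : Fin n) :
    1 / 2 ≤ μ j := by
  set w : Fin n ⊕ Fin n → ℂ := Pi.single (Sum.inl j) 1 + Pi.single (Sum.inr j) Complex.I
  have hw : star w ⬝ᵥ (subISympJ ((2 : ℝ) • diagonal (Sum.elim μ μ)) *ᵥ w) =
      ((4 * μ j - 2 : ℝ) : ℂ) := by
    simp [w, subISympJ, sympJ, mulVec_add, dotProduct_add, add_dotProduct]
    linear_combination (1 - 2 * (μ j : ℂ)) * Complex.I_sq
  have := h.dotProduct_mulVec_nonneg w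
  rw [hw, Complex.zero_le_real] at this
  linarith

lemma exists_mul_eq_one_and_sq_add_sq_eq {m : ℝ} (hm : 2 ≤ m) :
    ∃ a b : ℝ, a * b = 1 ∧ a ^ 2 + b ^ 2 = m := by
  have hp := Real.sq_sqrt (show 0 ≤ m + 2 by linarith)
  have hq := Real.sq_sqrt (show 0 ≤ m - 2 by linarith)
  exact ⟨(√(m + 2) + √(m - 2)) / 2, (√(m + 2) - √(m - 2)) / 2,
    by linear_combination (hp - hq) / 4, by linear_combination (hp + hq) / 2⟩

lemma exists_isSymplectic_add_eq_smul_diagonal {μ : Fin n → ℝ} (hμ : ∀ j, 1 / 2 ≤ μ j) :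
    ∃ X Y : Matrix (Fin n ⊕ Fin n) (Fin n ⊕ Fin n) ℝ, IsSymplectic X ∧ IsSymplectic Y ∧
      Xᵀ * X + Yᵀ * Y = (4 : ℝ) • diagonal (Sum.elim μ μ) := by
  choose a b hab hsq using fun j ↦
    exists_mul_eq_one_and_sq_add_sq_eq (m := 4 * μ j) (by linarith [hμ j])
  refine ⟨diagonal (Sum.elim a b), diagonal (Sum.elim b a), isSymplectic_diagonal hab,
    isSymplectic_diagonal fun j ↦ by rw [mul_comm, hab], ?_⟩
  rw [diagonal_transpose, diagonal_transpose, diagonal_mul_diagonal, diagonal_mul_diagonal,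
    diagonal_add, ← diagonal_smul]
  congr 1
  funext j
  rcases j with j | j <;> simp [← hsq, sq, add_comm]

section Eigenvectors

variable {ι κ : Type*} [Fintype ι] [Fintype κ] [DecidableEq κ]

lemma transpose_mul_self_apply_eq_zero {R : Type*} [CommRing R] [NoZeroDivisors R]
    {H : Matrix ι ι R} {U : Matrix ι κ R} {d : κ → R} (hH : Hᵀ = -H)
    (hU : H * U = U * diagonal d) {j k : κ} (hjk : d j + d k ≠ 0) : (Uᵀ * U) j k = 0 := by
  have key : Uᵀ * U * diagonal d = -(diagonal d * (Uᵀ * U)) :=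
    calc Uᵀ * U * diagonal d = Uᵀ * (H * U) := by rw [hU, Matrix.mul_assoc]
      _ = -((H * U)ᵀ * U) := by rw [transpose_mul, hH]; simp [Matrix.mul_assoc]
      _ = -(diagonal d * (Uᵀ * U)) := by
        rw [hU, transpose_mul, diagonal_transpose, Matrix.mul_assoc]
  have hjk' := congrFun (congrFun key j) k
  simp only [mul_diagonal, Matrix.neg_apply, diagonal_mul] at hjk'
  have hprod : (d j + d k) * (Uᵀ * U) j k = 0 := by linear_combination hjk'
  exact (mul_eq_zero.1 hprod).resolve_left hjk

/-- The columns of `V` together with their complex conjugates form an orthonormal family. -/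
lemma two_mul_card_le_of_conjTranspose_mul_self_eq_one {V : Matrix ι κ ℂ} (h₁ : Vᴴ * V = 1)
    (h₀ : Vᵀ * V = 0) : 2 * Fintype.card κ ≤ Fintype.card ι := by
  set B := fromCols V (V.map (starRingEnd ℂ))
  have hB : Bᴴ * B = 1 := by
    have hc : (V.map (starRingEnd ℂ))ᴴ = Vᵀ := by ext; simp
    have hs : Vᴴ = Vᵀ.map (starRingEnd ℂ) := rfl
    have e₀ : Vᴴ * V.map (starRingEnd ℂ) = (Vᵀ * V).map (starRingEnd ℂ) := by
      rw [hs, Matrix.map_mul]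
    have e₁ : Vᵀ * V.map (starRingEnd ℂ) = (Vᴴ * V).map (starRingEnd ℂ) := by
      rw [Matrix.map_mul, hs, Matrix.map_map]
      congr 1; ext; simp
    rw [conjTranspose_fromCols_eq_fromRows_conjTranspose, fromRows_mul_fromCols, hc, e₀, e₁, h₀,
      h₁]
    simp
  calc 2 * Fintype.card κ = (1 : Matrix (κ ⊕ κ) (κ ⊕ κ) ℂ).rank := by simp [two_mul]
    _ ≤ B.rank := hB ▸ rank_mul_le_right _ _
    _ ≤ Fintype.card ι := rank_le_card_height B

variable [DecidableEq ι]

lemma submatrix_of_unitary_eigenbasis {H U : Matrix ι ι ℂ} {d : ι → ℂ} (hH : Hᵀ = -H)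
    (hU : star U * U = 1) (hHU : H * U = U * diagonal d) {f : κ → ι}
    (hf : Function.Injective f) (hd : ∀ j k, d (f j) + d (f k) ≠ 0) :
    (U.submatrix id f)ᴴ * U.submatrix id f = 1 ∧ (U.submatrix id f)ᵀ * U.submatrix id f = 0 ∧
      H * U.submatrix id f = U.submatrix id f * diagonal (d ∘ f) := by
  refine ⟨?_, ?_, ?_⟩
  · rw [conjTranspose_submatrix, ← submatrix_mul _ _ _ _ _ Function.bijective_id,
      ← star_eq_conjTranspose, hU, submatrix_one _ hf]
  · ext j k
    rw [transpose_submatrix, ← submatrix_mul _ _ _ _ _ Function.bijective_id]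
    exact transpose_mul_self_apply_eq_zero hH hHU (hd j k)
  · refine Matrix.ext fun i j ↦ ?_
    have hcol := congrFun (congrFun hHU i) (f j)
    rw [mul_diagonal] at hcol ⊢
    simpa [mul_apply] using hcol

lemma exists_isometry_mul_diagonal_of_transpose_eq_neg {H : Matrix ι ι ℂ}
    (hH : H.IsHermitian) (hHt : Hᵀ = -H) (hdet : H.det ≠ 0) (hι : Fintype.card ι = 2 * n) :
    ∃ (V : Matrix ι (Fin n) ℂ) (μ : Fin n → ℝ), (∀ j, 0 < μ j) ∧ Vᴴ * V = 1 ∧ Vᵀ * V = 0 ∧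
      H * V = V * diagonal (fun j ↦ (μ j : ℂ)) := by
  set U : Matrix ι ι ℂ := ↑hH.eigenvectorUnitary
  set ev := hH.eigenvalues
  have hU : star U * U = 1 := Unitary.coe_star_mul_self _
  have hHU : H * U = U * diagonal (fun q ↦ (ev q : ℂ)) := by
    conv_lhs => rw [hH.spectral_theorem, Unitary.conjStarAlgAut_apply]
    rw [Matrix.mul_assoc, hU, Matrix.mul_one]
    rfl
  have hev : ∀ q, ev q ≠ 0 := fun q hq ↦ hdet <| by
    rw [hH.det_eq_prod_eigenvalues]
    exact Finset.prod_eq_zero (Finset.mem_univ q) (by simp [ev, hq])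
  have hcard : ∀ (p : ι → Prop) [DecidablePred p], (∀ q r, p q → p r → ev q + ev r ≠ 0) →
      2 * Fintype.card {q // p q} ≤ 2 * n := fun p _ hp ↦ hι ▸ by
    obtain ⟨h₁, h₀, -⟩ := submatrix_of_unitary_eigenbasis hHt hU hHU Subtype.val_injective
      fun q r ↦ by exact_mod_cast hp _ _ q.2 r.2
    exact two_mul_card_le_of_conjTranspose_mul_self_eq_one h₁ h₀
  have hpos := hcard (fun q ↦ 0 < ev q) fun q r hq hr ↦ (add_pos hq hr).ne'
  have hneg := hcard (fun q ↦ ¬ 0 < ev q) fun q r hq hr ↦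
    (add_neg ((not_lt.1 hq).lt_of_ne (hev q)) ((not_lt.1 hr).lt_of_ne (hev r))).ne
  have hsum := Fintype.card_subtype_compl (fun q ↦ 0 < ev q)
  have hle := Fintype.card_subtype_le (fun q ↦ 0 < ev q)
  set e := (Fintype.equivFinOfCardEq (by omega : Fintype.card {q // 0 < ev q} = n)).symm
  obtain ⟨h₁, h₀, hHV⟩ := submatrix_of_unitary_eigenbasis hHt hU hHU (f := Subtype.val ∘ e)
    (Subtype.val_injective.comp e.injective)
    fun j k ↦ by exact_mod_cast (add_pos (e j).2 (e k).2).ne'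
  exact ⟨_, fun j ↦ ev (e j), fun j ↦ (e j).2, h₁, h₀, hHV⟩

end Eigenvectors

section RealAndImaginaryParts

variable {ι κ : Type*} [Fintype ι] (V : Matrix ι κ ℂ)

lemma map_re_conjTranspose_mul_self : (Vᴴ * V).map Complex.re =
    (V.map Complex.re)ᵀ * V.map Complex.re + (V.map Complex.im)ᵀ * V.map Complex.im := by
  ext; simp [mul_apply, Finset.sum_add_distrib]

lemma map_im_conjTranspose_mul_self : (Vᴴ * V).map Complex.im =
    (V.map Complex.re)ᵀ * V.map Complex.im - (V.map Complex.im)ᵀ * V.map Complex.re := by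
  ext; simp [mul_apply, ← Finset.sum_sub_distrib, ← sub_eq_add_neg]

lemma map_re_transpose_mul_self : (Vᵀ * V).map Complex.re =
    (V.map Complex.re)ᵀ * V.map Complex.re - (V.map Complex.im)ᵀ * V.map Complex.im := by
  ext; simp [mul_apply, Finset.sum_sub_distrib]

lemma map_im_transpose_mul_self : (Vᵀ * V).map Complex.im =
    (V.map Complex.re)ᵀ * V.map Complex.im + (V.map Complex.im)ᵀ * V.map Complex.re := by
  ext; simp [mul_apply, Finset.sum_add_distrib]

end RealAndImaginaryParts

/-- The columns of `O` are, up to `√2`, the real and imaginary parts of the eigenvectors of the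
Hermitian matrix `iK` for its positive eigenvalues. -/
theorem exists_orthogonal_mul_sympJ_mul_diagonal
    {K : Matrix (Fin n ⊕ Fin n) (Fin n ⊕ Fin n) ℝ} (hK : Kᵀ = -K) (hdet : K.det ≠ 0) :
    ∃ (O : Matrix (Fin n ⊕ Fin n) (Fin n ⊕ Fin n) ℝ) (μ : Fin n → ℝ), (∀ j, 0 < μ j) ∧
      Oᵀ * O = 1 ∧ K * O = O * (sympJ n * diagonal (Sum.elim μ μ)) := by
  set H := Complex.I • K.map Complex.ofReal
  have hH : H.IsHermitian := by
    rw [IsHermitian, conjTranspose_smul, conjTranspose_map_ofReal, hK]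
    ext; simp [H]
  have hHt : Hᵀ = -H := by
    rw [transpose_smul, ← transpose_map, hK]
    ext; simp [H]
  have hdetH : H.det ≠ 0 := by
    have : (K.map Complex.ofReal).det = K.det := (RingHom.map_det Complex.ofRealHom K).symm
    simp [H, this, hdet]
  obtain ⟨V, μ, hμ, h₁, h₀, hHV⟩ :=
    exists_isometry_mul_diagonal_of_transpose_eq_neg hH hHt hdetH (n := n) (by simp [two_mul])
  set A := V.map Complex.re
  set B := V.map Complex.im
  have hsum : Aᵀ * A + Bᵀ * B = 1 := by
    rw [← map_re_conjTranspose_mul_self, h₁]; ext i j; by_cases i = j <;> simp [one_apply, *]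
  have hskew : Aᵀ * B - Bᵀ * A = 0 := by
    rw [← map_im_conjTranspose_mul_self, h₁]; ext i j; by_cases i = j <;> simp [one_apply, *]
  have hdiff : Aᵀ * A - Bᵀ * B = 0 := by
    rw [← map_re_transpose_mul_self, h₀]; ext; simp
  have hsymm : Aᵀ * B + Bᵀ * A = 0 := by
    rw [← map_im_transpose_mul_self, h₀]; ext; simp
  have hKA : K * A = B * diagonal μ := by
    ext i j
    have := congrArg Complex.im (congrFun (congrFun hHV i) j)
    rw [mul_diagonal] at this ⊢
    simpa [H, A, B, mul_apply] using this
  have hKB : K * B = -(A * diagonal μ) := by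
    ext i j
    have := congrArg Complex.re (congrFun (congrFun hHV i) j)
    rw [mul_diagonal] at this
    rw [Matrix.neg_apply, mul_diagonal]
    simpa [H, A, B, mul_apply, neg_eq_iff_eq_neg, -Fintype.sum_sum_type] using this
  have hAB : Aᵀ * B = 0 := by
    linear_combination (norm := module) (1 / 2 : ℝ) • (hskew + hsymm)
  have hBA : Bᵀ * A = 0 := by
    linear_combination (norm := module) (1 / 2 : ℝ) • (hsymm - hskew)
  have hAA : (2 : ℝ) • (Aᵀ * A) = 1 := by linear_combination (norm := module) hsum + hdiff
  have hBB : (2 : ℝ) • (Bᵀ * B) = 1 := by linear_combination (norm := module) hsum - hdiff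
  refine ⟨√2 • fromCols A B, μ, hμ, ?_, ?_⟩
  · rw [transpose_smul, Matrix.smul_mul, Matrix.mul_smul, smul_smul,
      Real.mul_self_sqrt zero_le_two, transpose_fromCols, fromRows_mul_fromCols, hAB, hBA,
      fromBlocks_smul, hAA, hBB, smul_zero, fromBlocks_one]
  · have hJD : sympJ n * diagonal (Sum.elim μ μ) = fromBlocks 0 (-diagonal μ) (diagonal μ) 0 := by
      simp [sympJ, ← fromBlocks_diagonal, fromBlocks_multiply]
    rw [Matrix.mul_smul, Matrix.smul_mul, hJD, mul_fromCols, fromCols_mul_fromBlocks, hKA, hKB]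
    simp [-diagonal_neg]

/-- Williamson's theorem. -/
theorem exists_isSymplectic_eq_transpose_mul_diagonal_mul
    {S : Matrix (Fin n ⊕ Fin n) (Fin n ⊕ Fin n) ℝ} (hS : S.PosDef) :
    ∃ (L : Matrix (Fin n ⊕ Fin n) (Fin n ⊕ Fin n) ℝ) (μ : Fin n → ℝ), (∀ j, 0 < μ j) ∧
      IsSymplectic L ∧ S = Lᵀ * diagonal (Sum.elim μ μ) * L := by
  obtain ⟨R, hR, rfl⟩ : ∃ R, IsUnit R ∧ S = Rᵀ * R := by
    open scoped MatrixOrder in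
    exact CStarAlgebra.isStrictlyPositive_iff_eq_star_mul_self.mp hS.isStrictlyPositive
  set K := R * sympJ n * Rᵀ
  have hK : Kᵀ = -K := by simp [K, transpose_mul, sympJ_transpose, Matrix.mul_assoc]
  have hdetK : K.det ≠ 0 := by
    have hRdet := ((isUnit_iff_isUnit_det R).1 hR).ne_zero
    have hJdet := ((isUnit_iff_isUnit_det _).1 (isUnit_sympJ (n := n))).ne_zero
    simp only [K, det_mul, det_transpose]
    exact mul_ne_zero (mul_ne_zero hRdet hJdet) hRdet
  obtain ⟨O, μ, hμ, hO, hKO⟩ := exists_orthogonal_mul_sympJ_mul_diagonal hK hdetK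
  set D := diagonal (Sum.elim μ μ)
  set c : Fin n → ℝ := fun j ↦ (√(μ j))⁻¹
  set C := diagonal (Sum.elim c c)
  have hCDC : C * D * C = 1 := by
    rw [diagonal_mul_diagonal, diagonal_mul_diagonal, ← diagonal_one]
    congr 1
    funext j
    rcases j with j | j <;>
    · simp only [Sum.elim_inl, Sum.elim_inr, c]
      field_simp [(Real.sqrt_pos.2 (hμ j)).ne']
      exact (Real.sq_sqrt (hμ j).le).symm
  have hCJ : C * sympJ n = sympJ n * C := (sympJ_mul_diagonal_comm c).symm
  refine ⟨C * Oᵀ * R, μ, hμ, isSymplectic_of_mul_sympJ_mul_transpose ?_, ?_⟩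
  · calc C * Oᵀ * R * sympJ n * (C * Oᵀ * R)ᵀ = C * (Oᵀ * (K * O)) * C := by
          simp [K, C, transpose_mul, Matrix.mul_assoc]
      _ = sympJ n * (C * D * C) := by
          rw [hKO, ← Matrix.mul_assoc Oᵀ, hO, Matrix.one_mul, ← Matrix.mul_assoc,
            ← Matrix.mul_assoc, hCJ]
          simp only [Matrix.mul_assoc]
      _ = sympJ n := by rw [hCDC, Matrix.mul_one]
  · have hOO : O * Oᵀ = 1 := mul_eq_one_comm.1 hO
    calc Rᵀ * R = Rᵀ * (O * (C * D * C) * Oᵀ) * R := by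
          rw [hCDC, Matrix.mul_one, hOO, Matrix.mul_one]
      _ = (C * Oᵀ * R)ᵀ * D * (C * Oᵀ * R) := by simp [C, transpose_mul, Matrix.mul_assoc]

end

theorem mem_Kset_iff_sum_of_symplectic (n : ℕ)
    (S : Matrix (Fin n ⊕ Fin n) (Fin n ⊕ Fin n) ℝ) (hS : S.PosDef) :
    S ∈ Kset n ↔
      ∃ L M : Matrix (Fin n ⊕ Fin n) (Fin n ⊕ Fin n) ℝ,
        IsSymplectic L ∧ IsSymplectic M ∧
        S = (1 / 4 : ℝ) • (Lᵀ * L + Mᵀ * M) := by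
  refine ⟨fun hK ↦ ?_, fun ⟨L, M, hL, hM, hLM⟩ ↦ hLM ▸ mem_Kset_of_isSymplectic hL hM⟩
  obtain ⟨L, μ, -, hL, rfl⟩ := exists_isSymplectic_eq_transpose_mul_diagonal_mul hS
  have hD : (subISympJ ((2 : ℝ) • diagonal (Sum.elim μ μ))).PosSemidef := by
    rw [← hL.posSemidef_subISympJ_transpose_mul_mul_iff, Matrix.mul_smul, Matrix.smul_mul]
    exact (mem_Kset_iff.1 hK).2
  obtain ⟨X, Y, hX, hY, hXY⟩ :=
    exists_isSymplectic_add_eq_smul_diagonal (half_le_of_posSemidef_subISympJ hD)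
  refine ⟨X * L, Y * L, hX.mul hL, hY.mul hL, ?_⟩
  calc Lᵀ * diagonal (Sum.elim μ μ) * L = (1 / 4 : ℝ) • (Lᵀ * (Xᵀ * X + Yᵀ * Y) * L) := by
        rw [hXY, Matrix.mul_smul, Matrix.smul_mul, smul_smul]; norm_num
    _ = (1 / 4 : ℝ) • ((X * L)ᵀ * (X * L) + (Y * L)ᵀ * (Y * L)) := by
        simp only [transpose_mul, Matrix.mul_add, Matrix.add_mul, Matrix.mul_assoc]
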